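/- In a Gaussian obedient mechanism where each a_i is θ_i-measurable with Cov(a_i, ω) = Cov(a_i, a_j) = Cov(a_i, θ_j) = 0 for j ≠ i, the obedience covariance constraints σ_{a_iθ_i} = (n-1)r·σ_{a_iθ_j} + t·σ_{θ_i}² and σ_{a_i}² = (n-1)r·σ_{a_ia_j} + s·σ_{a_iω} + t·σ_{a_iθ_i} imply σ_{a_iθ_i} = t·σ_{θ_i}² and σ_{a_i}² = t²·σ_{θ_i}²; hence a_i = μ_{a_i} + t(θ_i - μ_{θ_i}) almost surely. -/

import Mathlib

open MeasureTheory ProbabilityTheory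

/-- Bayes–Nash equilibrium as an obedient mechanism: if `a_i` is
`θ_i`-measurable so that `Cov(a_i,ω) = Cov(a_i,a_j) = Cov(a_i,θ_j) = 0`, the
obedience covariance constraints force `Cov(a_i,θ_i) = t·Var(θ_i)` and
`Var(a_i) = t²·Var(θ_i)`; hence `a_i = μ_{a_i} + t(θ_i - μ_{θ_i})` a.s. -/
theorem bayes_nash_obedient_mechanism
    {Ω : Type*} [MeasureSpace Ω] [IsProbabilityMeasure (ℙ : Measure Ω)]
    (n : ℕ) (hn : 2 ≤ n) (r s t : ℝ)
    (a θ : Ω → ℝ) (ha : MemLp a 2 ℙ) (hθ : MemLp θ 2 ℙ)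
    (σa2 σaθi σaθj σaω σaa σθ2 : ℝ) (hσθ : 0 < σθ2)
    (hvarθ : ∫ x, (θ x - ∫ y, θ y) ^ 2 = σθ2)
    (hvara : ∫ x, (a x - ∫ y, a y) ^ 2 = σa2)
    (hcov : ∫ x, (a x - ∫ y, a y) * (θ x - ∫ y, θ y) = σaθi)
    (hθj : σaθj = 0) (hω : σaω = 0) (haa : σaa = 0)
    (hobed1 : σaθi = ((n : ℝ) - 1) * r * σaθj + t * σθ2)
    (hobed2 : σa2 = ((n : ℝ) - 1) * r * σaa + s * σaω + t * σaθi) :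
    σaθi = t * σθ2 ∧ σa2 = t ^ 2 * σθ2 ∧
    ∀ᵐ x ∂ℙ, a x = (∫ y, a y) + t * (θ x - ∫ y, θ y) := by
  have h1 : σaθi = t * σθ2 := by rw [hobed1, hθj]; ring
  have h2 : σa2 = t ^ 2 * σθ2 := by rw [hobed2, haa, hω, h1]; ring
  refine ⟨h1, h2, ?_⟩
  set A : Ω → ℝ := fun x => a x - ∫ y, a y with hA
  set B : Ω → ℝ := fun x => θ x - ∫ y, θ y with hB
  have hAm : MemLp A 2 ℙ := ha.sub (memLp_const _)
  have hBm : MemLp B 2 ℙ := hθ.sub (memLp_const _)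
  have hA2 : Integrable (fun x => A x ^ 2) ℙ := hAm.integrable_sq
  have hB2 : Integrable (fun x => B x ^ 2) ℙ := hBm.integrable_sq
  have hAB : Integrable (fun x => A x * B x) ℙ := by
    have : MemLp (A • B) 1 ℙ := hBm.smul hAm
    rw [← memLp_one_iff_integrable]
    exact this
  have hf : MemLp (fun x => A x - t * B x) 2 ℙ :=
    hAm.sub (hBm.const_mul t)
  have hf2 : Integrable (fun x => (A x - t * B x) ^ 2) ℙ := hf.integrable_sq
  have hexp : ∫ x, (A x - t * B x) ^ 2 = 0 := by
    have : ∀ x, (A x - t * B x) ^ 2 = A x ^ 2 - (2 * t) * (A x * B x) + t ^ 2 * B x ^ 2 := by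
      intro x; ring
    rw [show (fun x => (A x - t * B x) ^ 2) = fun x =>
        A x ^ 2 - (2 * t) * (A x * B x) + t ^ 2 * B x ^ 2 from funext this]
    rw [integral_add (by exact (hA2.sub (hAB.const_mul (2 * t)))) (hB2.const_mul (t ^ 2)),
        integral_sub hA2 (hAB.const_mul (2 * t)), integral_const_mul, integral_const_mul,
        hvara, hcov, hvarθ, h2, h1]
    ring
  have hzero : ∀ᵐ x ∂ℙ, (A x - t * B x) ^ 2 = 0 := by
    have := (integral_eq_zero_iff_of_nonneg (fun x => sq_nonneg _) hf2).mp hexp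
    filter_upwards [this] with x hx using hx
  filter_upwards [hzero] with x hx
  have : A x - t * B x = 0 := by
    have := sq_eq_zero_iff.mp hx
    exact this
  simp only [hA, hB] at this
  linarith
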